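/- arXiv:1910.01781 — 5 statements merged into one kernel-verified Lean document; each statement's English description precedes it below -/
import Mathlib

section
/- Let n ≥ 1, α > 0, x ∈ ℝⁿ, and let τ be a coordinate index with e_τ the standard basis vector of ℝⁿ. Then sup_{w ∈ ℝⁿ} [⟨(w + x)⁺, e_τ⟩ − α‖w‖²] = max(1/(4α) + x_τ, 0), where (·)⁺ acts componentwise as max(·, 0). -/
lemma sum_single_mul {n : ℕ} (τ : Fin n) (f : Fin n → ℝ) :
    (∑ k, f k * (Pi.single τ 1 : Fin n → ℝ) k) = f τ := by
  simp [Pi.single_apply, mul_ite]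

/-- Third lookup-table entry: sup over w ∈ ℝⁿ of ⟨(w+x)⁺, e_τ⟩ − α‖w‖²
equals (1/(4α) + x_τ)⁺. -/
theorem stmt4 (n : ℕ) (hn : 1 ≤ n) (α : ℝ) (hα : 0 < α) (x : Fin n → ℝ) (τ : Fin n) :
    sSup {v : ℝ | ∃ w : Fin n → ℝ,
        v = (∑ k, max (w k + x k) 0 * (Pi.single τ 1 : Fin n → ℝ) k) - α * ∑ k, (w k) ^ 2} =
      max (1 / (4 * α) + x τ) 0 := by
  set M := max (1 / (4 * α) + x τ) 0 with hM
  have hub : ∀ v ∈ {v : ℝ | ∃ w : Fin n → ℝ,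
      v = (∑ k, max (w k + x k) 0 * (Pi.single τ 1 : Fin n → ℝ) k) - α * ∑ k, (w k) ^ 2},
      v ≤ M := by
    rintro v ⟨w, rfl⟩
    rw [sum_single_mul τ (fun k => max (w k + x k) 0)]
    have hsum : (w τ) ^ 2 ≤ ∑ k, (w k) ^ 2 :=
      Finset.single_le_sum (fun k _ => sq_nonneg (w k)) (Finset.mem_univ τ)
    have hα' : (0:ℝ) < 4 * α := by linarith
    rcases le_or_gt (w τ + x τ) 0 with h | h
    · rw [max_eq_right h]
      have : (0:ℝ) ≤ M := le_max_right _ _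
      nlinarith [sq_nonneg (w τ)]
    · rw [max_eq_left h.le]
      have h1 : 1 / (4 * α) + x τ ≤ M := le_max_left _ _
      have key : w τ + x τ - α * (w τ) ^ 2 ≤ 1 / (4 * α) + x τ := by
        have h4 : 1 / (4 * α) * (4 * α) = 1 := by field_simp
        nlinarith [sq_nonneg (2 * α * w τ - 1), hα]
      nlinarith
  apply le_antisymm
  · exact csSup_le ⟨_, ⟨0, rfl⟩⟩ hub
  · rcases le_or_gt 0 (1 / (4 * α) + x τ) with h | h
    · have hMeq : M = 1 / (4 * α) + x τ := max_eq_left h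
      apply le_csSup ⟨M, hub⟩
      refine ⟨Pi.single τ (1 / (2 * α)), ?_⟩
      rw [sum_single_mul τ (fun k => max ((Pi.single τ (1 / (2 * α)) : Fin n → ℝ) k + x k) 0)]
      have hsq : (∑ k, ((Pi.single τ (1 / (2 * α)) : Fin n → ℝ) k) ^ 2)
          = (1 / (2 * α)) ^ 2 := by
        rw [Finset.sum_eq_single τ]
        · simp
        · intro b _ hb; simp [Pi.single_apply, hb]
        · simp
      rw [hsq]
      have hpos : (0:ℝ) ≤ 1 / (2 * α) + x τ := by
        have : 1 / (4 * α) ≤ 1 / (2 * α) := by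
          apply div_le_div_of_nonneg_left <;> linarith
        linarith
      rw [Pi.single_eq_same, max_eq_left hpos, hMeq]
      have h2α : (2 * α) ≠ 0 := by positivity
      field_simp
      ring
    · have hMeq : M = 0 := max_eq_right h.le
      apply le_csSup ⟨M, hub⟩
      refine ⟨0, ?_⟩
      rw [sum_single_mul τ (fun k => max ((0 : Fin n → ℝ) k + x k) 0)]
      have hx : x τ ≤ 0 := by
        have : (0:ℝ) < 1 / (4 * α) := by positivity
        linarith
      simp [hMeq, max_eq_right hx]
end

section
/- Let n ≥ 1, α > 0, x ∈ ℝⁿ, and let τ be a coordinate index with e_τ the standard basis vector of ℝⁿ. Then sup_{w ∈ ℝⁿ} [⟨(w + x)⁻, e_τ⟩ − α‖w‖²] equals −α x_τ² if −1/(2α) ≤ x_τ ≤ 0, and equals min(1/(4α) + x_τ, 0) otherwise, where (·)⁻ acts componentwise as min(·, 0). -/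
lemma sum_mul_single {n : ℕ} (τ : Fin n) (f : Fin n → ℝ) :
    ∑ k, f k * (Pi.single τ 1 : Fin n → ℝ) k = f τ := by
  rw [Finset.sum_eq_single τ]
  · simp
  · intro b _ hb; simp [Pi.single_apply, hb]
  · simp

lemma sum_sq_single {n : ℕ} (τ : Fin n) (t : ℝ) :
    ∑ k, ((Pi.single τ t : Fin n → ℝ) k) ^ 2 = t ^ 2 := by
  rw [Finset.sum_eq_single τ]
  · simp
  · intro b _ hb; simp [Pi.single_apply, hb]
  · simp

/-- Fourth lookup-table entry: sup over w ∈ ℝⁿ of ⟨(w+x)⁻, e_τ⟩ − α‖w‖². -/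
theorem stmt5 (n : ℕ) (hn : 1 ≤ n) (α : ℝ) (hα : 0 < α) (x : Fin n → ℝ) (τ : Fin n) :
    sSup {v : ℝ | ∃ w : Fin n → ℝ,
        v = (∑ k, min (w k + x k) 0 * (Pi.single τ 1 : Fin n → ℝ) k) - α * ∑ k, (w k) ^ 2} =
      if -(1 / (2 * α)) ≤ x τ ∧ x τ ≤ 0 then -(α * (x τ) ^ 2)
      else min (1 / (4 * α) + x τ) 0 := by
  set c := x τ with hc
  apply IsGreatest.csSup_eq
  constructor
  · -- membership: the sup is attained
    by_cases h : -(1 / (2 * α)) ≤ c ∧ c ≤ 0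
    · rw [if_pos h]
      refine ⟨Pi.single τ (-c), ?_⟩
      rw [sum_mul_single τ (fun k => min ((Pi.single τ (-c) : Fin n → ℝ) k + x k) 0),
        sum_sq_single]
      simp [← hc]
    · rw [if_neg h]
      push_neg at h
      by_cases h2 : c ≤ 0
      · have h1 : c < -(1 / (2 * α)) := lt_of_not_ge (fun hle => absurd h2 (not_le_of_gt (h hle)))
        have hmin : min (1 / (4 * α) + c) 0 = 1 / (4 * α) + c := by
          apply min_eq_left
          have : 1 / (4 * α) < 1 / (2 * α) := by
            apply div_lt_div_of_pos_left one_pos (by positivity) (by linarith)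
          linarith
        rw [hmin]
        refine ⟨Pi.single τ (1 / (2 * α)), ?_⟩
        rw [sum_mul_single τ (fun k => min ((Pi.single τ (1 / (2 * α)) : Fin n → ℝ) k + x k) 0),
          sum_sq_single]
        simp only [Pi.single_eq_same, ← hc]
        have hmin2 : min (1 / (2 * α) + c) 0 = 1 / (2 * α) + c := by
          apply min_eq_left; linarith
        rw [hmin2]
        field_simp
        ring
      · push_neg at h2
        have hmin : min (1 / (4 * α) + c) 0 = 0 := by
          apply min_eq_right
          have : 0 < 1 / (4 * α) := by positivity
          linarith
        rw [hmin]
        refine ⟨0, ?_⟩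
        rw [sum_mul_single τ (fun k => min ((0 : Fin n → ℝ) k + x k) 0)]
        simp [← hc, min_eq_right h2.le]
  · -- upper bound
    rintro v ⟨w, rfl⟩
    rw [sum_mul_single τ (fun k => min (w k + x k) 0)]
    have hsum : (w τ) ^ 2 ≤ ∑ k, (w k) ^ 2 :=
      Finset.single_le_sum (fun i _ => sq_nonneg (w i)) (Finset.mem_univ τ)
    have key : min (w τ + c) 0 - α * (w τ) ^ 2 ≤
        if -(1 / (2 * α)) ≤ c ∧ c ≤ 0 then -(α * c ^ 2)
        else min (1 / (4 * α) + c) 0 := by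
      set t := w τ
      by_cases h : -(1 / (2 * α)) ≤ c ∧ c ≤ 0
      · rw [if_pos h]
        obtain ⟨h1, h2⟩ := h
        have h1' : -1 ≤ 2 * α * c := by
          rw [neg_le, ← neg_le] at h1
          calc (-1 : ℝ) = (2 * α) * (-(1 / (2 * α))) := by field_simp
          _ ≤ 2 * α * c := by nlinarith
        rcases min_cases (t + c) 0 with ⟨hm, hm'⟩ | ⟨hm, hm'⟩
        · rw [hm]
          have ht : α * t ≤ 1 + α * c - α * c - α * c := by nlinarith
          nlinarith [mul_nonneg (neg_nonneg.2 hm') (show (0:ℝ) ≤ 1 + α * c - α * t by nlinarith)]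
        · rw [hm]
          have h3 : -c ≤ t := by linarith
          nlinarith [mul_le_mul h3 h3 (by linarith : (0:ℝ) ≤ -c) (by linarith : (0:ℝ) ≤ t)]
      · rw [if_neg h]
        push_neg at h
        have hq : t - α * t ^ 2 ≤ 1 / (4 * α) := by
          rw [le_div_iff₀ (by positivity : (0:ℝ) < 4 * α)]
          nlinarith [sq_nonneg (2 * α * t - 1)]
        have hkey : 1 / (4 * α) + c + α * c ^ 2 = α * (c + 1 / (2 * α)) ^ 2 := by
          field_simp; ring
        rcases min_cases (t + c) 0 with ⟨hm, hm'⟩ | ⟨hm, hm'⟩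
        · rw [hm]
          apply le_min
          · linarith
          · nlinarith
        · rw [hm]
          apply le_min
          · by_cases hcpos : 0 < c
            · have hp : (0:ℝ) < 1 / (4 * α) := by positivity
              nlinarith [mul_nonneg hα.le (sq_nonneg t)]
            · have h1 : c < -(1 / (2 * α)) := by
                by_contra hle
                exact hcpos (h (le_of_not_gt hle))
              have h3 : -c ≤ t := by
                have hp : (0:ℝ) < 1 / (2 * α) := by positivity
                linarith
              have h4 : (-c) * (-c) ≤ t * t := by
                have hp : (0:ℝ) < 1 / (2 * α) := by positivity
                exact mul_le_mul h3 h3 (by linarith) (by linarith)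
              have h6 : 0 ≤ α * (c + 1 / (2 * α)) ^ 2 :=
                mul_nonneg hα.le (sq_nonneg _)
              nlinarith [mul_le_mul_of_nonneg_left h4 hα.le]
          · nlinarith
    calc min (w τ + x τ) 0 - α * ∑ k, (w k) ^ 2
        ≤ min (w τ + x τ) 0 - α * (w τ) ^ 2 := by nlinarith
      _ ≤ _ := key
end

section
/- Let n ≥ 1, α > 0, x ∈ ℝⁿ, and let T be a nonempty set of coordinate indices of ℝⁿ. Define g(t) := −α t² if −1/(2α) ≤ t ≤ 0 and g(t) := min(1/(4α) + t, 0) otherwise. Then sup over τ ∈ T and w ∈ ℝⁿ of [min(w_τ + x_τ, 0) − α‖w‖²] equals max_{τ ∈ T} g(x_τ). -/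
private lemma ub1d (α : ℝ) (hα : 0 < α) (c t : ℝ) :
    min (t + c) 0 - α * t ^ 2 ≤
      if -(1 / (2 * α)) ≤ c ∧ c ≤ 0 then -(α * c ^ 2) else min (1 / (4 * α) + c) 0 := by
  have e1 : 1 / (2 * α) * (2 * α) = 1 := by field_simp
  have e2 : 1 / (4 * α) * (4 * α) = 1 := by field_simp
  split_ifs with h
  · obtain ⟨h1, h2⟩ := h
    rcases le_or_gt 0 (t + c) with ht | ht
    · have h3 : c ^ 2 ≤ t ^ 2 := by nlinarith
      have h4 : min (t + c) 0 ≤ 0 := min_le_right _ _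
      nlinarith
    · rw [min_eq_left ht.le]
      nlinarith [sq_nonneg (t + c), mul_pos hα hα]
  · rcases le_or_gt (t + c) 0 with ht | ht
    · rw [min_eq_left ht]
      apply le_min
      · nlinarith [sq_nonneg (2 * α * t - 1), mul_pos hα hα]
      · nlinarith [mul_nonneg hα.le (sq_nonneg t)]
    · rw [min_eq_right ht.le]
      push_neg at h
      rcases lt_or_ge c (-(1 / (2 * α))) with hc | hc
      · apply le_min
        · have hp : 0 < 1 / (2 * α) := by positivity
          have hcneg : c < 0 := by linarith
          have h3 : c ^ 2 ≤ t ^ 2 := by nlinarith [mul_pos ht (show 0 < t - c by linarith)]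
          nlinarith [sq_nonneg (2 * α * c + 1), mul_pos hα hα]
        · nlinarith [mul_nonneg hα.le (sq_nonneg t)]
      · have hc2 : 0 < c := h hc
        have : 0 < 1 / (4 * α) + c := by positivity
        rw [min_eq_right this.le]
        nlinarith [mul_nonneg hα.le (sq_nonneg t)]

private lemma att1d (α : ℝ) (hα : 0 < α) (c : ℝ) :
    ∃ t : ℝ, min (t + c) 0 - α * t ^ 2 =
      if -(1 / (2 * α)) ≤ c ∧ c ≤ 0 then -(α * c ^ 2) else min (1 / (4 * α) + c) 0 := by
  have e1 : 1 / (2 * α) * (2 * α) = 1 := by field_simp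
  split_ifs with h
  · exact ⟨-c, by rw [show -c + c = 0 by ring, min_self]; ring⟩
  · push_neg at h
    rcases lt_or_ge c (-(1 / (2 * α))) with hc | hc
    · refine ⟨1 / (2 * α), ?_⟩
      have ht : 1 / (2 * α) + c < 0 := by linarith
      have h4 : 1 / (4 * α) + c < 0 := by
        have : 1 / (4 * α) < 1 / (2 * α) := by
          apply div_lt_div_of_pos_left one_pos (by positivity) (by linarith)
        linarith
      rw [min_eq_left ht.le, min_eq_left h4.le]
      field_simp
      ring
    · have hc2 : 0 < c := h hc
      refine ⟨0, ?_⟩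
      have : 0 < 1 / (4 * α) + c := by positivity
      rw [zero_add, min_eq_right hc2.le, min_eq_right this.le]
      ring

/-- Case 3b of Proposition 2.1: joint sup over τ ∈ T and w ∈ ℝⁿ of
(w_τ + x_τ)⁻ − α‖w‖² equals max over τ ∈ T of g(x_τ). -/
theorem stmt7 (n : ℕ) (hn : 1 ≤ n) (α : ℝ) (hα : 0 < α) (x : Fin n → ℝ)
    (T : Finset (Fin n)) (hT : T.Nonempty) :
    sSup {v : ℝ | ∃ τ ∈ T, ∃ w : Fin n → ℝ,
        v = min (w τ + x τ) 0 - α * ∑ k, (w k) ^ 2} =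
      T.sup' hT (fun τ =>
        if -(1 / (2 * α)) ≤ x τ ∧ x τ ≤ 0 then -(α * (x τ) ^ 2)
        else min (1 / (4 * α) + x τ) 0) := by
  set g : Fin n → ℝ := fun τ =>
    if -(1 / (2 * α)) ≤ x τ ∧ x τ ≤ 0 then -(α * (x τ) ^ 2)
    else min (1 / (4 * α) + x τ) 0 with hg
  apply IsGreatest.csSup_eq
  constructor
  · -- sup' attained
    obtain ⟨τ₀, hτ₀, hsup⟩ := T.exists_mem_eq_sup' hT g
    obtain ⟨t, htv⟩ := att1d α hα (x τ₀)
    refine ⟨τ₀, hτ₀, fun k => if k = τ₀ then t else 0, ?_⟩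
    have hsum : ∑ k, (if k = τ₀ then t else 0) ^ 2 = t ^ 2 := by
      rw [Finset.sum_eq_single τ₀] <;> simp (config := { contextual := true })
    simp only [if_true, hsum]
    rw [hsup]
    exact htv.symm
  · rintro v ⟨τ, hτ, w, rfl⟩
    have h1 : (w τ) ^ 2 ≤ ∑ k, (w k) ^ 2 :=
      Finset.single_le_sum (fun i _ => sq_nonneg (w i)) (Finset.mem_univ τ)
    have h2 : min (w τ + x τ) 0 - α * ∑ k, (w k) ^ 2 ≤
        min (w τ + x τ) 0 - α * (w τ) ^ 2 := by
      nlinarith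
    calc min (w τ + x τ) 0 - α * ∑ k, (w k) ^ 2
        ≤ min (w τ + x τ) 0 - α * (w τ) ^ 2 := h2
      _ ≤ g τ := ub1d α hα (x τ) (w τ)
      _ ≤ T.sup' hT g := Finset.le_sup' g hτ
end

section
/- Let n ≥ 1, α > 0, S > 0, z ∈ ℝⁿ, and m ∈ {0, 1, …, n}. For l ∈ {0, 1, …, n} let p(l) ∈ ℝⁿ denote the prefix indicator vector with p(l)_k = 1 for k ≤ l and p(l)_k = 0 for k > l, and set y := p(m). Then the supremum over u ∈ ℝⁿ and l ∈ {0, 1, …, n} of [ ⟨u, p(l)⟩ − α( ‖u − z‖² + S ‖p(l) − y‖² ) ] equals ⟨z, y⟩ + max_{l ∈ {0,…,n}} [ l/(4α) + ( Σ_{k=1}^{l} z_k − Σ_{k=1}^{m} z_k ) − α S |l − m| ]. -/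
/-!
Completing the square coordinatewise,
`⟨u, c⟩ - α ‖u - z‖² = ⟨z, c⟩ + ‖c‖² / (4α) - α ‖u - z - c / (2α)‖²`,
so for a fixed prefix indicator `c = p(l)` the supremum over `u` is attained at
`u = z + c / (2α)`. Since `‖p(l)‖² = l` and `‖p(l) - p(m)‖² = |l - m|`, what remains is a
maximum over the finitely many `l ≤ n`, which is attained.
-/

open Finset Set

lemma sum_prefix_indicator {n l : ℕ} (hl : l ≤ n) :
    ∑ k : Fin n, (if (k : ℕ) < l then (1 : ℝ) else 0) = l := by
  rw [sum_boole, Fin.card_filter_val_lt, min_eq_right hl]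

lemma sum_sq_sub_prefix_indicator {n l m : ℕ} (hl : l ≤ n) (hm : m ≤ n) :
    ∑ k : Fin n, ((if (k : ℕ) < l then (1 : ℝ) else 0) - if (k : ℕ) < m then 1 else 0) ^ 2
      = |(l : ℝ) - m| := by
  wlog hml : m ≤ l generalizing l m
  · simpa only [sub_sq_comm, abs_sub_comm] using this hm hl (by omega)
  have hsq (k : Fin n) : ((if (k : ℕ) < l then (1 : ℝ) else 0) - if (k : ℕ) < m then 1 else 0) ^ 2
      = (if (k : ℕ) < l then 1 else 0) - if (k : ℕ) < m then 1 else 0 := by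
    split_ifs <;> first | omega | norm_num
  rw [sum_congr rfl fun k _ => hsq k, sum_sub_distrib, sum_prefix_indicator hl,
    sum_prefix_indicator hm, abs_of_nonneg (sub_nonneg.2 (Nat.cast_le.2 hml))]

section CompleteSquare

variable {ι : Type*} [Fintype ι] {α : ℝ}

lemma sum_mul_sub_sum_sq_eq (hα : α ≠ 0) (u z c : ι → ℝ) :
    ∑ k, u k * c k - α * ∑ k, (u k - z k) ^ 2
      = ∑ k, z k * c k + (∑ k, c k ^ 2) / (4 * α)
        - α * ∑ k, (u k - z k - c k / (2 * α)) ^ 2 := by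
  simp only [mul_sum, sum_div, ← sum_sub_distrib, ← sum_add_distrib]
  refine sum_congr rfl fun k _ => ?_
  field_simp
  ring

lemma isGreatest_range_sum_mul_sub_sum_sq (hα : 0 < α) (z c : ι → ℝ) :
    IsGreatest (range fun u : ι → ℝ => ∑ k, u k * c k - α * ∑ k, (u k - z k) ^ 2)
      (∑ k, z k * c k + (∑ k, c k ^ 2) / (4 * α)) := by
  simp only [sum_mul_sub_sum_sq_eq hα.ne']
  refine ⟨⟨fun k => z k + c k / (2 * α), by simp⟩, ?_⟩
  rintro _ ⟨u, rfl⟩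
  have hsq : 0 ≤ ∑ k, (u k - z k - c k / (2 * α)) ^ 2 := by positivity
  simpa using mul_nonneg hα.le hsq

end CompleteSquare

lemma isGreatest_sup'_of_forall_isGreatest_range {ι β γ : Type*} [LinearOrder γ]
    {s : Finset ι} (hs : s.Nonempty) {f : ι → β → γ} {M : ι → γ}
    (h : ∀ i ∈ s, IsGreatest (range (f i)) (M i)) :
    IsGreatest {v | ∃ b, ∃ i ∈ s, v = f i b} (s.sup' hs M) := by
  constructor
  · obtain ⟨i, hi, hM⟩ := exists_mem_eq_sup' hs M
    obtain ⟨b, hb⟩ := (h i hi).1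
    exact ⟨b, i, hi, by rw [hM, hb]⟩
  · rintro _ ⟨b, i, hi, rfl⟩
    exact ((h i hi).2 ⟨b, rfl⟩).trans (le_sup' M hi)

theorem stmt9_general (n : ℕ) (α S : ℝ) (hα : 0 < α)
    (z : Fin n → ℝ) (m : ℕ) (hm : m ≤ n) :
    sSup {v : ℝ | ∃ u : Fin n → ℝ, ∃ l ≤ n,
        v = (∑ k : Fin n, u k * (if (k : ℕ) < l then (1 : ℝ) else 0))
            - α * ((∑ k, (u k - z k) ^ 2)
              + S * ∑ k : Fin n, ((if (k : ℕ) < l then (1 : ℝ) else 0)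
                  - (if (k : ℕ) < m then (1 : ℝ) else 0)) ^ 2)} =
      (∑ k : Fin n, z k * (if (k : ℕ) < m then (1 : ℝ) else 0))
        + (Finset.range (n + 1)).sup' Finset.nonempty_range_add_one (fun l =>
            (l : ℝ) / (4 * α)
              + ((∑ k : Fin n, if (k : ℕ) < l then z k else 0)
                  - ∑ k : Fin n, if (k : ℕ) < m then z k else 0)
              - α * S * |(l : ℝ) - (m : ℝ)|) := by
  refine IsGreatest.csSup_eq ?_
  simp_rw [add_sup', ← Finset.mem_range_succ_iff]
  refine isGreatest_sup'_of_forall_isGreatest_range _ fun l hl => ?_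
  rw [Finset.mem_range_succ_iff] at hl
  have hquad := Monotone.map_isGreatest (f := fun x : ℝ => x - α * S * |(l : ℝ) - m|)
    (fun _ _ h => sub_le_sub_right h _)
    (isGreatest_range_sum_mul_sub_sum_sq hα z fun k : Fin n => if (k : ℕ) < l then 1 else 0)
  rw [← range_comp] at hquad
  convert hquad using 1
  · congr 1
    funext u
    simp only [Function.comp_apply, sum_sq_sub_prefix_indicator hl hm]
    ring
  · simp only [ite_pow, one_pow, zero_pow two_ne_zero, mul_ite, mul_one, mul_zero,
      sum_prefix_indicator hl]
    ring

/-- Proposition 2.2 (robust FVA inner problem): closed form of the dual inner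
function Ψ_α(z, y) with y = p(m) a prefix indicator vector. -/
theorem stmt9 (n : ℕ) (hn : 1 ≤ n) (α S : ℝ) (hα : 0 < α) (hS : 0 < S)
    (z : Fin n → ℝ) (m : ℕ) (hm : m ≤ n) :
    sSup {v : ℝ | ∃ u : Fin n → ℝ, ∃ l ≤ n,
        v = (∑ k : Fin n, u k * (if (k : ℕ) < l then (1 : ℝ) else 0))
            - α * ((∑ k, (u k - z k) ^ 2)
              + S * ∑ k : Fin n, ((if (k : ℕ) < l then (1 : ℝ) else 0)
                  - (if (k : ℕ) < m then (1 : ℝ) else 0)) ^ 2)} =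
      (∑ k : Fin n, z k * (if (k : ℕ) < m then (1 : ℝ) else 0))
        + (Finset.range (n + 1)).sup' Finset.nonempty_range_add_one (fun l =>
            (l : ℝ) / (4 * α)
              + ((∑ k : Fin n, if (k : ℕ) < l then z k else 0)
                  - ∑ k : Fin n, if (k : ℕ) < m then z k else 0)
              - α * S * |(l : ℝ) - (m : ℝ)|) :=
  stmt9_general n α S hα z m hm
end

section
/- Let N ≥ 1, n ≥ 1, δ > 0, α > 0, S > 0, and for each i ∈ {1, …, N} let z_i ∈ ℝⁿ and m_i ∈ {0, …, n}, with y_i := p(m_i) the prefix indicator vector (p(l)_k = 1 for k ≤ l, 0 otherwise). Define Ψ_α(z_i, y_i) := sup over u ∈ ℝⁿ and l ∈ {0,…,n} of [ ⟨u, p(l)⟩ − α( ‖u − z_i‖² + S ‖p(l) − y_i‖² ) ]. Then inf_{α > 0} [ α δ + (1/N) Σ_{i=1}^{N} Ψ_α(z_i, y_i) ] = (1/N) Σ_{i=1}^{N} ⟨z_i, y_i⟩ + min_{α > 0} [ α δ + (1/N) Σ_{i=1}^{N} max_{l ∈ {0,…,n}} ( l/(4α) + ( Σ_{k=1}^{l}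 (z_i)_k − Σ_{k=1}^{m_i} (z_i)_k ) − α S |l − m_i| ) ], and the minimum on the right-hand side is attained at some α* ∈ (0, ∞). -/
/-!
For a fixed level `l`, the supremum over `u` in `Ψ_α` is a concave quadratic problem solved
coordinatewise by completing the square at `u = z + p(l) / (2α)`; it equals
`⟨z, p(l)⟩ + l / (4α)`, and `‖p(l) - p(m)‖² = |l - m|`. Hence the dual objective is the empirical
FVA plus the penalty `G(α)`. The function `G` is continuous on `(0, ∞)`, dominates `α δ` (the term
`l = m`) and blows up like `n / (4α)` as `α → 0⁺` (the term `l = n`), so it attains its minimum.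
-/

open Finset Filter Set Real Topology

theorem ContinuousOn.exists_isMinOn_Ioi_zero {f : ℝ → ℝ} (hf : ContinuousOn f (Ioi 0))
    (h0 : Tendsto f (𝓝[>] 0) atTop) (htop : Tendsto f atTop atTop) :
    ∃ x ∈ Ioi (0 : ℝ), IsMinOn f (Ioi 0) x := by
  -- Reparametrizing by `exp` moves the problem to the whole line, where coercivity suffices.
  have hcont : Continuous (f ∘ exp) := hf.comp_continuous continuous_exp exp_pos
  have hlim : Tendsto (f ∘ exp) (cocompact ℝ) atTop := by
    rw [cocompact_eq_atBot_atTop]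
    exact tendsto_sup.2 ⟨h0.comp tendsto_exp_atBot_nhdsGT, htop.comp tendsto_exp_atTop⟩
  obtain ⟨t, ht⟩ := hcont.exists_forall_le hlim
  refine ⟨exp t, exp_pos t, isMinOn_iff.2 fun x (hx : 0 < x) => ?_⟩
  simpa [Real.exp_log hx] using ht (Real.log x)

theorem sum_mul_sub_mul_sum_sub_sq {ι : Type*} [Fintype ι] {α : ℝ} (hα : α ≠ 0) (u y z : ι → ℝ) :
    ∑ k, u k * y k - α * ∑ k, (u k - z k) ^ 2 =
      ∑ k, z k * y k + (∑ k, y k ^ 2) / (4 * α) - α * ∑ k, (u k - z k - y k / (2 * α)) ^ 2 := by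
  simp only [mul_sum, sum_div, ← sum_sub_distrib, ← sum_add_distrib]
  refine sum_congr rfl fun k _ => ?_
  field_simp
  ring

section PrefixIndicator

variable {n : ℕ}

-- The vector `p(l)` of the paper; coordinates are indexed from `0`, so `k < l` reads `k ≤ l`.
def prefixInd (l : ℕ) (k : Fin n) : ℝ := if (k : ℕ) < l then 1 else 0

theorem sum_prefixInd {l : ℕ} (hl : l ≤ n) : ∑ k : Fin n, prefixInd l k = l := by
  simp [prefixInd, sum_boole, Fin.card_filter_val_lt, hl]

theorem prefixInd_sq (l : ℕ) (k : Fin n) : prefixInd l k ^ 2 = prefixInd l k := by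
  unfold prefixInd; split_ifs <;> norm_num

theorem sum_mul_prefixInd (x : Fin n → ℝ) (l : ℕ) :
    ∑ k, x k * prefixInd l k = ∑ k : Fin n, if (k : ℕ) < l then x k else 0 := by
  simp [prefixInd]

theorem sum_prefixInd_sub_prefixInd_sq {l m : ℕ} (hl : l ≤ n) (hm : m ≤ n) :
    ∑ k : Fin n, (prefixInd l k - prefixInd m k) ^ 2 = |(l : ℝ) - m| := by
  have hterm : ∀ k : Fin n, (prefixInd l k - prefixInd m k) ^ 2 =
      prefixInd (max l m) k - prefixInd (min l m) k := by
    intro k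
    simp only [prefixInd, lt_max_iff, lt_min_iff]
    split_ifs <;> grind
  rw [sum_congr rfl fun k _ => hterm k, sum_sub_distrib,
    sum_prefixInd (max_le hl hm), sum_prefixInd (min_le_left _ _ |>.trans hl),
    Nat.cast_max, Nat.cast_min, max_sub_min_eq_abs, abs_sub_comm]

end PrefixIndicator

section PathPenalty

variable {n : ℕ} (S : ℝ)

noncomputable def pathPenalty (α : ℝ) (z : Fin n → ℝ) (m l : ℕ) : ℝ :=
  (l : ℝ) / (4 * α)
    + ((∑ k : Fin n, if (k : ℕ) < l then z k else 0) - ∑ k : Fin n, if (k : ℕ) < m then z k else 0)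
    - α * S * |(l : ℝ) - (m : ℝ)|

theorem dualObjective_eq {α : ℝ} (hα : α ≠ 0) {l m : ℕ} (hl : l ≤ n) (hm : m ≤ n)
    (u z : Fin n → ℝ) :
    (∑ k, u k * prefixInd l k)
        - α * ((∑ k, (u k - z k) ^ 2) + S * ∑ k : Fin n, (prefixInd l k - prefixInd m k) ^ 2) =
      (∑ k, z k * prefixInd m k) + pathPenalty S α z m l
        - α * ∑ k, (u k - z k - prefixInd l k / (2 * α)) ^ 2 := by
  have h := sum_mul_sub_mul_sum_sub_sq hα u (prefixInd l) z
  simp only [prefixInd_sq, sum_prefixInd hl, sum_mul_prefixInd] at h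
  simp only [sum_prefixInd_sub_prefixInd_sq hl hm, sum_mul_prefixInd, pathPenalty]
  linear_combination h

theorem sSup_dualObjective_eq {α : ℝ} (hα : 0 < α) {m : ℕ} (hm : m ≤ n) (z : Fin n → ℝ) :
    sSup {v : ℝ | ∃ u : Fin n → ℝ, ∃ l ≤ n, v = (∑ k, u k * prefixInd l k)
        - α * ((∑ k, (u k - z k) ^ 2) + S * ∑ k : Fin n, (prefixInd l k - prefixInd m k) ^ 2)} =
      (∑ k, z k * prefixInd m k)
        + (range (n + 1)).sup' nonempty_range_add_one (pathPenalty S α z m) := by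
  obtain ⟨l₀, hl₀, hmax⟩ := exists_mem_eq_sup' nonempty_range_add_one (pathPenalty S α z m)
  refine IsGreatest.csSup_eq ⟨⟨fun k => z k + prefixInd l₀ k / (2 * α), l₀,
    mem_range_succ_iff.1 hl₀, ?_⟩, ?_⟩
  · rw [dualObjective_eq S hα.ne' (mem_range_succ_iff.1 hl₀) hm, hmax]
    simp
  · rintro v ⟨u, l, hl, rfl⟩
    rw [dualObjective_eq S hα.ne' hl hm]
    have hsq : 0 ≤ α * ∑ k, (u k - z k - prefixInd l k / (2 * α)) ^ 2 := by positivity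
    have hle := le_sup' (pathPenalty S α z m) (mem_range_succ_iff.2 hl)
    linarith

theorem pathPenalty_self (α : ℝ) (z : Fin n → ℝ) (m : ℕ) :
    pathPenalty S α z m m = m / (4 * α) := by
  simp [pathPenalty]

theorem sup'_pathPenalty_nonneg {α : ℝ} (hα : 0 ≤ α) {m : ℕ} (hm : m ≤ n) (z : Fin n → ℝ) :
    0 ≤ (range (n + 1)).sup' nonempty_range_add_one (pathPenalty S α z m) := by
  refine le_trans ?_ (le_sup' _ (mem_range_succ_iff.2 hm))
  rw [pathPenalty_self]
  positivity

theorem continuousOn_pathPenalty (z : Fin n → ℝ) (m l : ℕ) :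
    ContinuousOn (fun α => pathPenalty S α z m l) (Ioi 0) := by
  unfold pathPenalty
  fun_prop (disch := intro α hα; exact mul_ne_zero four_ne_zero (ne_of_gt hα))

theorem tendsto_pathPenalty_nhdsGT (hn : 1 ≤ n) (z : Fin n → ℝ) (m : ℕ) :
    Tendsto (fun α => pathPenalty S α z m n) (𝓝[>] 0) atTop := by
  have hinv : Tendsto (fun α : ℝ => (n : ℝ) / (4 * α)) (𝓝[>] 0) atTop := by
    refine (tendsto_inv_nhdsGT_zero.const_mul_atTop (by positivity : (0 : ℝ) < n / 4)).congr
      fun α => ?_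
    ring
  unfold pathPenalty
  simp_rw [add_sub_assoc]
  exact hinv.atTop_add ((Continuous.tendsto (by fun_prop) 0).mono_left nhdsWithin_le_nhds)

end PathPenalty

section PenaltyObjective

variable {N n : ℕ} (δ S : ℝ) (z : Fin N → Fin n → ℝ) (m : Fin N → ℕ)

noncomputable def penaltyObjective (α : ℝ) : ℝ :=
  α * δ + (1 / (N : ℝ)) * ∑ i, (range (n + 1)).sup' nonempty_range_add_one
    (pathPenalty S α (z i) (m i))

theorem continuousOn_penaltyObjective : ContinuousOn (penaltyObjective δ S z m) (Ioi 0) := by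
  unfold penaltyObjective
  refine (continuous_mul_const δ).continuousOn.add (continuousOn_const.mul ?_)
  exact continuousOn_finsetSum _ fun i _ => ContinuousOn.finset_sup'_apply _ fun l _ =>
    continuousOn_pathPenalty S (z i) (m i) l

variable {δ m}

theorem mul_le_penaltyObjective (hm : ∀ i, m i ≤ n) {α : ℝ} (hα : 0 ≤ α) :
    α * δ ≤ penaltyObjective δ S z m α := by
  unfold penaltyObjective
  exact le_add_of_nonneg_right <| mul_nonneg (by positivity) <|
    sum_nonneg fun i _ => sup'_pathPenalty_nonneg S hα (hm i) (z i)

theorem tendsto_penaltyObjective_atTop (hδ : 0 < δ) (hm : ∀ i, m i ≤ n) :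
    Tendsto (penaltyObjective δ S z m) atTop atTop :=
  tendsto_atTop_mono' _ (eventually_ge_atTop 0 |>.mono fun _ hα =>
    mul_le_penaltyObjective S z hm hα) (tendsto_id.atTop_mul_const hδ)

theorem tendsto_penaltyObjective_nhdsGT (hδ : 0 ≤ δ) (hN : 1 ≤ N) (hn : 1 ≤ n)
    (hm : ∀ i, m i ≤ n) : Tendsto (penaltyObjective δ S z m) (𝓝[>] 0) atTop := by
  let i₀ : Fin N := ⟨0, hN⟩
  have hN₀ : (0 : ℝ) < 1 / N := one_div_pos.2 (Nat.cast_pos.2 hN)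
  refine tendsto_atTop_mono' _ ?_
    ((tendsto_pathPenalty_nhdsGT S hn (z i₀) (m i₀)).const_mul_atTop hN₀)
  filter_upwards [self_mem_nhdsWithin] with α (hα : 0 < α)
  calc 1 / (N : ℝ) * pathPenalty S α (z i₀) (m i₀) n
      ≤ 1 / (N : ℝ) * (range (n + 1)).sup' nonempty_range_add_one
          (pathPenalty S α (z i₀) (m i₀)) := by
        gcongr
        exact le_sup' _ (self_mem_range_succ n)
    _ ≤ 1 / (N : ℝ) * ∑ i, (range (n + 1)).sup' nonempty_range_add_one
          (pathPenalty S α (z i) (m i)) := by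
        gcongr
        exact single_le_sum (fun i _ => sup'_pathPenalty_nonneg S hα.le (hm i) (z i)) (mem_univ i₀)
    _ ≤ penaltyObjective δ S z m α := le_add_of_nonneg_left (by positivity)

end PenaltyObjective

theorem stmt13_general (N n : ℕ) (hN : 1 ≤ N) (hn : 1 ≤ n) (δ S : ℝ) (hδ : 0 < δ)
    (z : Fin N → Fin n → ℝ) (m : Fin N → ℕ) (hm : ∀ i, m i ≤ n)
    (Ψ : ℝ → Fin N → ℝ)
    (hΨ : ∀ (α : ℝ) (i : Fin N), Ψ α i =
      sSup {v : ℝ | ∃ u : Fin n → ℝ, ∃ l ≤ n,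
        v = (∑ k : Fin n, u k * (if (k : ℕ) < l then (1 : ℝ) else 0))
            - α * ((∑ k, (u k - z i k) ^ 2)
              + S * ∑ k : Fin n, ((if (k : ℕ) < l then (1 : ℝ) else 0)
                  - (if (k : ℕ) < m i then (1 : ℝ) else 0)) ^ 2)})
    (G : ℝ → ℝ)
    (hG : ∀ α : ℝ, G α =
      α * δ + (1 / (N : ℝ)) * ∑ i, (Finset.range (n + 1)).sup' Finset.nonempty_range_add_one
        (fun l => (l : ℝ) / (4 * α)
          + ((∑ k : Fin n, if (k : ℕ) < l then z i k else 0)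
              - ∑ k : Fin n, if (k : ℕ) < m i then z i k else 0)
          - α * S * |(l : ℝ) - ((m i : ℕ) : ℝ)|)) :
    ∃ αstar ∈ Set.Ioi (0 : ℝ),
      (∀ α ∈ Set.Ioi (0 : ℝ), G αstar ≤ G α) ∧
      sInf {v : ℝ | ∃ α ∈ Set.Ioi (0 : ℝ), v = α * δ + (1 / (N : ℝ)) * ∑ i, Ψ α i} =
        (1 / (N : ℝ)) * (∑ i, ∑ k : Fin n, z i k * (if (k : ℕ) < m i then (1 : ℝ) else 0))
          + G αstar := by
  obtain rfl : G = penaltyObjective δ S z m := funext hG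
  have hdual : ∀ α ∈ Ioi (0 : ℝ), α * δ + (1 / (N : ℝ)) * ∑ i, Ψ α i =
      (1 / (N : ℝ)) * (∑ i, ∑ k, z i k * prefixInd (m i) k) + penaltyObjective δ S z m α := by
    intro α hα
    have hΨα : ∀ i, Ψ α i = (∑ k, z i k * prefixInd (m i) k) + (range (n + 1)).sup'
        nonempty_range_add_one (pathPenalty S α (z i) (m i)) := fun i =>
      (hΨ α i).trans (sSup_dualObjective_eq S hα (hm i) (z i))
    simp only [hΨα, sum_add_distrib, penaltyObjective]
    ring
  obtain ⟨αstar, hαstar, hmin⟩ := (continuousOn_penaltyObjective δ S z m).exists_isMinOn_Ioi_zero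
    (tendsto_penaltyObjective_nhdsGT S z hδ.le hN hn hm) (tendsto_penaltyObjective_atTop S z hδ hm)
  rw [isMinOn_iff] at hmin
  refine ⟨αstar, hαstar, hmin, IsLeast.csInf_eq ⟨⟨αstar, hαstar, ?_⟩, ?_⟩⟩
  · exact (hdual αstar hαstar).symm
  · rintro v ⟨α, hα, rfl⟩
    rw [hdual α hα]
    exact add_le_add_right (hmin α hα) _

/-- Dual side of Theorem 2.2 (robust FVA): the dual objective
F(α) = α δ + (1/N) Σᵢ Ψ_α(zᵢ, yᵢ) has infimum over α > 0 equal to the empirical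
FVA plus the closed-form penalty term, with the minimum attained at some α* > 0. -/
theorem stmt13 (N n : ℕ) (hN : 1 ≤ N) (hn : 1 ≤ n) (δ S : ℝ) (hδ : 0 < δ) (hS : 0 < S)
    (z : Fin N → Fin n → ℝ) (m : Fin N → ℕ) (hm : ∀ i, m i ≤ n)
    (Ψ : ℝ → Fin N → ℝ)
    (hΨ : ∀ (α : ℝ) (i : Fin N), Ψ α i =
      sSup {v : ℝ | ∃ u : Fin n → ℝ, ∃ l ≤ n,
        v = (∑ k : Fin n, u k * (if (k : ℕ) < l then (1 : ℝ) else 0))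
            - α * ((∑ k, (u k - z i k) ^ 2)
              + S * ∑ k : Fin n, ((if (k : ℕ) < l then (1 : ℝ) else 0)
                  - (if (k : ℕ) < m i then (1 : ℝ) else 0)) ^ 2)})
    (G : ℝ → ℝ)
    (hG : ∀ α : ℝ, G α =
      α * δ + (1 / (N : ℝ)) * ∑ i, (Finset.range (n + 1)).sup' Finset.nonempty_range_add_one
        (fun l => (l : ℝ) / (4 * α)
          + ((∑ k : Fin n, if (k : ℕ) < l then z i k else 0)
              - ∑ k : Fin n, if (k : ℕ) < m i then z i k else 0)
          - α * S * |(l : ℝ) - ((m i : ℕ) : ℝ)|)) :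
    ∃ αstar ∈ Set.Ioi (0 : ℝ),
      (∀ α ∈ Set.Ioi (0 : ℝ), G αstar ≤ G α) ∧
      sInf {v : ℝ | ∃ α ∈ Set.Ioi (0 : ℝ), v = α * δ + (1 / (N : ℝ)) * ∑ i, Ψ α i} =
        (1 / (N : ℝ)) * (∑ i, ∑ k : Fin n, z i k * (if (k : ℕ) < m i then (1 : ℝ) else 0))
          + G αstar :=
  stmt13_general N n hN hn δ S hδ z m hm Ψ hΨ G hG
end
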